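/- There exists a constant C > 0 such that for all integers m, n ≥ 2 with at least one of m and n even, and for every position (i, j) of the m × n Torus Puzzle, both the transposition swapping the horizontally adjacent positions (i, j) and (i, j + 1 mod n), and the transposition swapping the vertically adjacent positions (i, j) and (i + 1 mod m, j), can each be written as a product of at most C · m · n unit rotations. -/

import Mathlib

/- Unit rightward rotation of row i of the m x n Torus Puzzle. -/
def rowRot (m n : ℕ) (i : Fin m) : Equiv.Perm (Fin m × Fin n) where
  toFun p := if p.1 = i then (i, finRotate n p.2) else p
  invFun p := if p.1 = i then (i, (finRotate n).symm p.2) else p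
  left_inv := by rintro ⟨a, b⟩; by_cases h : a = i <;> simp [h, -finRotate_apply, -finRotate_symm_apply]
  right_inv := by rintro ⟨a, b⟩; by_cases h : a = i <;> simp [h, -finRotate_apply, -finRotate_symm_apply]

/- Unit downward rotation of column j of the m x n Torus Puzzle. -/
def colRot (m n : ℕ) (j : Fin n) : Equiv.Perm (Fin m × Fin n) where
  toFun p := if p.2 = j then (finRotate m p.1, j) else p
  invFun p := if p.2 = j then ((finRotate m).symm p.1, j) else p
  left_inv := by rintro ⟨a, b⟩; by_cases h : b = j <;> simp [h, -finRotate_apply, -finRotate_symm_apply]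
  right_inv := by rintro ⟨a, b⟩; by_cases h : b = j <;> simp [h, -finRotate_apply, -finRotate_symm_apply]

/- The set S(m,n) of the m + n unit rotations. -/
def unitRotations (m n : ℕ) : Set (Equiv.Perm (Fin m × Fin n)) :=
  Set.range (rowRot m n) ∪ Set.range (colRot m n)

/-!
Write `ρ` for the rotation of row `i`, `γ` for the rotation of column `j` and `s` for the swap of
`(i, j)` with the cell `(i + 1, j)` below it. Since `s * γ` fixes row `i` pointwise, it commutes
with `ρ`, whence `γ ρ γ⁻¹ = s ρ s` and `γ ρ γ⁻¹ ρ = (s ρ) ^ 2`. Now `s ρ` is the `(n + 1)`-cycle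
running along row `i` with `(i + 1, j)` spliced in, so for `n = 2 r` we get
`ρ (γ ρ γ⁻¹ ρ) ^ r = ρ (s ρ) ^ n = ρ (s ρ)⁻¹ = s`, a word of length `O(m n)`. The horizontal swap
is the conjugate `s (ρ s ρ⁻¹) s = (γ ρ γ⁻¹ ρ⁻¹) s`, and the case of even `m` follows by
transposing the torus.
-/

open Equiv Equiv.Perm Fin.NatCast Fin.CommRing

def WordLengthLE {G : Type*} [Monoid G] (S : Set G) (k : ℕ) (g : G) : Prop :=
  ∃ L : List G, (∀ x ∈ L, x ∈ S) ∧ L.prod = g ∧ L.length ≤ k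

namespace WordLengthLE

variable {G H : Type*} [Monoid G] [Monoid H] {S : Set G} {k l : ℕ} {g h : G}

lemma one : WordLengthLE S 0 1 := ⟨[], by simp, rfl, le_rfl⟩

lemma of_mem (hg : g ∈ S) : WordLengthLE S 1 g := ⟨[g], by simpa, by simp, le_rfl⟩

lemma mono (hkl : k ≤ l) : WordLengthLE S k g → WordLengthLE S l g
  | ⟨L, hS, hL, hk⟩ => ⟨L, hS, hL, hk.trans hkl⟩

lemma mul : WordLengthLE S k g → WordLengthLE S l h → WordLengthLE S (k + l) (g * h)
  | ⟨L, hS, hL, hk⟩, ⟨L', hS', hL', hl⟩ =>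
    ⟨L ++ L', by simpa [or_imp, forall_and] using ⟨hS, hS'⟩, by simp [hL, hL'],
      by simp only [List.length_append]; omega⟩

lemma pow (hg : WordLengthLE S k g) (e : ℕ) : WordLengthLE S (e * k) (g ^ e) := by
  induction e with
  | zero => simpa using one
  | succ e ih => simpa [pow_succ, add_mul] using ih.mul hg

lemma map {T : Set H} (f : G →* H) (hf : ∀ x ∈ S, f x ∈ T) :
    WordLengthLE S k g → WordLengthLE T k (f g)
  | ⟨L, hS, hL, hk⟩ =>
    ⟨L.map f, by simpa using fun x hx => hf x (hS x hx), by rw [← hL, map_list_prod], by simpa⟩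

end WordLengthLE

namespace Equiv.Perm

variable {α : Type*}

theorem pow_eq_one_of_forall_eq_pow_apply {f : Perm α} {x : α} {N : ℕ} (hN : (f ^ N) x = x)
    (horb : ∀ y, f y ≠ y → ∃ k : ℕ, (f ^ k) x = y) : f ^ N = 1 := by
  ext y
  by_cases hy : f y = y
  · exact pow_apply_eq_self_of_apply_eq_self hy N
  · obtain ⟨k, rfl⟩ := horb y hy
    rw [one_apply, ← mul_apply, ← pow_add, add_comm, pow_add, mul_apply, hN]

variable [DecidableEq α]

theorem conj_eq_swap_conj {ρ γ : Perm α} {x : α} (hρ : ρ (γ x) = γ x)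
    (hγ : ∀ z, ρ z ≠ z → z ≠ x → γ z = z) :
    γ * ρ * γ⁻¹ = swap (γ x) x * ρ * swap (γ x) x := by
  set δ := swap (γ x) x * γ
  have hδ : Disjoint δ ρ := by
    intro z
    by_cases hz : ρ z = z
    · exact Or.inr hz
    left
    by_cases hzx : z = x
    · simp [δ, hzx]
    · have hzγ : z ≠ γ x := fun h => hz (h ▸ hρ)
      simp [δ, hγ z hz hzx, swap_apply_of_ne_of_ne hzγ hzx]
  have hγδ : γ = swap (γ x) x * δ := by simp [δ, ← mul_assoc]
  calc γ * ρ * γ⁻¹ = swap (γ x) x * (δ * ρ * δ⁻¹) * swap (γ x) x := by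
        conv_lhs => rw [hγδ]
        simp [mul_assoc]
    _ = swap (γ x) x * ρ * swap (γ x) x := by rw [hδ.commute.mul_inv_cancel]

lemma permCongr_prodComm_swap {β : Type*} [DecidableEq β] (x y : α × β) :
    (prodComm α β).permCongr (swap x y) = swap x.swap y.swap := by
  rw [permCongr_def, symm_trans_swap_trans]
  rfl

end Equiv.Perm

lemma Fin.add_one_ne_self {m : ℕ} [NeZero m] (hm : 2 ≤ m) (i : Fin m) : i + 1 ≠ i :=
  add_ne_left.2 (by rw [Ne, Fin.one_eq_zero_iff]; omega)

section Torus

variable {m n : ℕ}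

lemma rowRot_apply [NeZero n] (i a : Fin m) (b : Fin n) :
    rowRot m n i (a, b) = if a = i then (i, b + 1) else (a, b) := by
  by_cases h : a = i <;> simp [rowRot, h, finRotate_apply]

lemma colRot_apply [NeZero m] (j : Fin n) (a : Fin m) (b : Fin n) :
    colRot m n j (a, b) = if b = j then (a + 1, j) else (a, b) := by
  by_cases h : b = j <;> simp [colRot, h, finRotate_apply]

lemma rowRot_pow_apply [NeZero n] (i a : Fin m) (b : Fin n) (k : ℕ) :
    (rowRot m n i ^ k) (a, b) = if a = i then (i, b + k) else (a, b) := by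
  induction k with
  | zero => split_ifs with h <;> simp [h]
  | succ k ih =>
    rw [pow_succ', mul_apply, ih]
    split_ifs with h <;> simp [rowRot_apply, h, add_assoc]

lemma rowRot_pow_card [NeZero n] (i : Fin m) : rowRot m n i ^ n = 1 := by
  ext ⟨a, b⟩ <;> rw [rowRot_pow_apply] <;> split_ifs with h <;> simp [h]

lemma permCongr_prodComm_rowRot (i : Fin m) :
    (prodComm (Fin m) (Fin n)).permCongr (rowRot m n i) = colRot n m i := by
  ext ⟨u, v⟩ <;> by_cases h : v = i <;> simp [rowRot, colRot, h]

lemma permCongr_prodComm_colRot (j : Fin n) :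
    (prodComm (Fin m) (Fin n)).permCongr (colRot m n j) = rowRot n m j := by
  ext ⟨u, v⟩ <;> by_cases h : u = j <;> simp [rowRot, colRot, h]

lemma permCongr_prodComm_mem_unitRotations {g : Perm (Fin m × Fin n)}
    (hg : g ∈ unitRotations m n) : (prodComm (Fin m) (Fin n)).permCongr g ∈ unitRotations n m := by
  rcases hg with ⟨i, rfl⟩ | ⟨j, rfl⟩
  · exact Or.inr ⟨i, (permCongr_prodComm_rowRot i).symm⟩
  · exact Or.inl ⟨j, (permCongr_prodComm_colRot j).symm⟩

lemma colRot_pow_card [NeZero m] (j : Fin n) : colRot m n j ^ m = 1 := by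
  rw [← permCongr_prodComm_rowRot, ← permCongrHom_coe, ← map_pow, rowRot_pow_card, map_one]

lemma WordLengthLE.permCongr_prodComm {k : ℕ} {g : Perm (Fin m × Fin n)}
    (hg : WordLengthLE (unitRotations m n) k g) :
    WordLengthLE (unitRotations n m) k ((prodComm (Fin m) (Fin n)).permCongr g) := by
  simpa using hg.map (prodComm (Fin m) (Fin n)).permCongrHom.toMonoidHom
    fun _ => permCongr_prodComm_mem_unitRotations

lemma wordLengthLE_rowRot (i : Fin m) : WordLengthLE (unitRotations m n) 1 (rowRot m n i) :=
  .of_mem (Or.inl ⟨i, rfl⟩)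

lemma wordLengthLE_colRot (j : Fin n) : WordLengthLE (unitRotations m n) 1 (colRot m n j) :=
  .of_mem (Or.inr ⟨j, rfl⟩)

lemma wordLengthLE_rowRot_inv [NeZero n] (i : Fin m) :
    WordLengthLE (unitRotations m n) (n - 1) (rowRot m n i)⁻¹ := by
  have h : (rowRot m n i)⁻¹ = rowRot m n i ^ (n - 1) := inv_eq_of_mul_eq_one_right <| by
    rw [← pow_succ', Nat.sub_add_cancel NeZero.one_le, rowRot_pow_card]
  simpa [h] using (wordLengthLE_rowRot i).pow (n - 1)

lemma wordLengthLE_colRot_inv [NeZero m] (j : Fin n) :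
    WordLengthLE (unitRotations m n) (m - 1) (colRot m n j)⁻¹ := by
  have h : (colRot m n j)⁻¹ = colRot m n j ^ (m - 1) := inv_eq_of_mul_eq_one_right <| by
    rw [← pow_succ', Nat.sub_add_cancel NeZero.one_le, colRot_pow_card]
  simpa [h] using (wordLengthLE_colRot j).pow (m - 1)

variable [NeZero m] [NeZero n]

lemma colRot_mul_rowRot_mul_inv (hm : 2 ≤ m) (i : Fin m) (j : Fin n) :
    colRot m n j * rowRot m n i * (colRot m n j)⁻¹ =
      swap (i + 1, j) (i, j) * rowRot m n i * swap (i + 1, j) (i, j) := by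
  have hγ : colRot m n j (i, j) = (i + 1, j) := by simp [colRot_apply]
  rw [← hγ]
  refine conj_eq_swap_conj ?_ ?_
  · simp [hγ, rowRot_apply, Fin.add_one_ne_self hm]
  · rintro ⟨a, b⟩ hρ hne
    rw [rowRot_apply] at hρ
    split_ifs at hρ with ha
    · subst ha
      have hb : b ≠ j := fun hb => hne (hb ▸ rfl)
      simp [colRot_apply, hb]
    · exact absurd rfl hρ

lemma swap_mul_rowRot_pow_succ_apply (hm : 2 ≤ m) (i : Fin m) (j : Fin n) {c : ℕ}
    (hc : c < n) :
    ((swap (i + 1, j) (i, j) * rowRot m n i) ^ (c + 1)) (i + 1, j) = (i, j + c) := by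
  induction c with
  | zero => simp [rowRot_apply, Fin.add_one_ne_self hm]
  | succ c ih =>
    have hc' : (c : Fin n) + 1 ≠ 0 := by
      rw [← Nat.cast_succ, Ne, Fin.natCast_eq_zero]
      exact Nat.not_dvd_of_pos_of_lt c.succ_pos hc
    rw [pow_succ', mul_apply, ih (by omega), mul_apply, rowRot_apply, if_pos rfl,
      swap_apply_of_ne_of_ne]
    · simp [add_assoc]
    · simp [Prod.ext_iff, (Fin.add_one_ne_self hm i).symm]
    · simpa [Prod.ext_iff, add_assoc] using hc'

lemma swap_mul_rowRot_pow_card_add_one (hm : 2 ≤ m) (i : Fin m) (j : Fin n) :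
    (swap (i + 1, j) (i, j) * rowRot m n i) ^ (n + 1) = 1 := by
  refine pow_eq_one_of_forall_eq_pow_apply (x := (i + 1, j)) ?_ ?_
  · obtain ⟨c, hc⟩ : ∃ c, c + 1 = n := ⟨n - 1, Nat.sub_add_cancel NeZero.one_le⟩
    have hc1 : (c : Fin n) + 1 = 0 := by
      have h : ((c + 1 : ℕ) : Fin n) = 0 := by rw [hc, Fin.natCast_self]
      exact_mod_cast h
    have horb := swap_mul_rowRot_pow_succ_apply hm i j (c := c) (by omega)
    rw [hc] at horb
    rw [pow_succ', mul_apply, horb, mul_apply, rowRot_apply, if_pos rfl, add_assoc, hc1, add_zero,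
      swap_apply_right]
  · rintro ⟨a, b⟩ hy
    by_cases ha : a = i
    · subst ha
      refine ⟨(b - j).val + 1, ?_⟩
      rw [swap_mul_rowRot_pow_succ_apply hm _ _ (b - j).isLt]
      simp
    · by_cases hab : (a, b) = (i + 1, j)
      · exact ⟨0, by simp [hab]⟩
      · have hp : (a, b) ≠ (i, j) := by simp [ha]
        simp [rowRot_apply, ha, swap_apply_of_ne_of_ne hab hp] at hy

theorem swap_vertical_eq (hm : 2 ≤ m) {r : ℕ} (hn : n = 2 * r) (i : Fin m) (j : Fin n) :
    swap (i, j) (i + 1, j) =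
      rowRot m n i * (colRot m n j * rowRot m n i * (colRot m n j)⁻¹ * rowRot m n i) ^ r := by
  have hcyc := swap_mul_rowRot_pow_card_add_one hm i j
  rw [pow_succ] at hcyc
  rw [colRot_mul_rowRot_mul_inv hm, mul_assoc (swap (i + 1, j) (i, j) * rowRot m n i), ← sq,
    ← pow_mul, ← hn, eq_inv_of_mul_eq_one_left hcyc, mul_inv_rev, swap_inv, mul_inv_cancel_left,
    swap_comm]

theorem swap_horizontal_eq (hm : 2 ≤ m) (hn : 2 ≤ n) (i : Fin m) (j : Fin n) :
    swap (i, j) (i, j + 1) =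
      colRot m n j * rowRot m n i * (colRot m n j)⁻¹ * (rowRot m n i)⁻¹ *
        swap (i, j) (i + 1, j) := by
  have hρ : rowRot m n i * swap (i + 1, j) (i, j) * (rowRot m n i)⁻¹ =
      swap (i + 1, j) (i, j + 1) := by
    rw [← swap_apply_apply]
    simp [rowRot_apply, Fin.add_one_ne_self hm]
  have hs : swap (i + 1, j) (i, j) * swap (i + 1, j) (i, j + 1) * (swap (i + 1, j) (i, j))⁻¹ =
      swap (i, j) (i, j + 1) := by
    rw [← swap_apply_apply, swap_apply_left, swap_apply_of_ne_of_ne]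
    · simp [(Fin.add_one_ne_self hm i).symm]
    · simp [Fin.add_one_ne_self hn]
  rw [colRot_mul_rowRot_mul_inv hm, swap_comm (i, j) (i + 1, j), ← hs, ← hρ, swap_inv]
  simp only [mul_assoc]

theorem wordLengthLE_swap_vertical (hm : 2 ≤ m) {r : ℕ} (hn : n = 2 * r) (i : Fin m)
    (j : Fin n) :
    WordLengthLE (unitRotations m n) (1 + r * (m + 2)) (swap (i, j) (i + 1, j)) := by
  rw [swap_vertical_eq hm hn]
  have hblock := (((wordLengthLE_colRot j).mul (wordLengthLE_rowRot i)).mul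
    (wordLengthLE_colRot_inv j)).mul (wordLengthLE_rowRot i)
  exact (wordLengthLE_rowRot i).mul ((hblock.mono (by omega)).pow r)

theorem wordLengthLE_swap_horizontal (hm : 2 ≤ m) {r : ℕ} (hn : n = 2 * r) (i : Fin m)
    (j : Fin n) :
    WordLengthLE (unitRotations m n) (m + n + 1 + r * (m + 2)) (swap (i, j) (i, j + 1)) := by
  have hr : 1 ≤ r := by have := NeZero.one_le (n := n); omega
  rw [swap_horizontal_eq hm (by omega)]
  have hcomm := (((wordLengthLE_colRot j).mul (wordLengthLE_rowRot i)).mul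
    (wordLengthLE_colRot_inv j)).mul (wordLengthLE_rowRot_inv i)
  exact (hcomm.mul (wordLengthLE_swap_vertical hm hn i j)).mono (by omega)

theorem wordLengthLE_adjacent_swaps (hm : 2 ≤ m) (hn : Even n) (i : Fin m) (j : Fin n) :
    WordLengthLE (unitRotations m n) (3 * m * n) (swap (i, j) (i, j + 1)) ∧
      WordLengthLE (unitRotations m n) (3 * m * n) (swap (i, j) (i + 1, j)) := by
  obtain ⟨r, hr⟩ := hn
  have hr1 : 1 ≤ r := by have := NeZero.one_le (n := n); omega
  subst hr
  constructor
  · exact (wordLengthLE_swap_horizontal hm (two_mul r).symm i j).mono (by nlinarith)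
  · exact (wordLengthLE_swap_vertical hm (two_mul r).symm i j).mono (by nlinarith)

end Torus

theorem adjacent_swap_bound :
    ∃ C : ℕ, 0 < C ∧ ∀ m n : ℕ, 2 ≤ m → 2 ≤ n → (Even m ∨ Even n) →
      ∀ i : Fin m, ∀ j : Fin n,
        (∃ L : List (Equiv.Perm (Fin m × Fin n)),
          (∀ g ∈ L, g ∈ unitRotations m n) ∧
          L.prod = Equiv.swap (i, j) (i, finRotate n j) ∧
          L.length ≤ C * m * n) ∧
        (∃ L : List (Equiv.Perm (Fin m × Fin n)),
          (∀ g ∈ L, g ∈ unitRotations m n) ∧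
          L.prod = Equiv.swap (i, j) (finRotate m i, j) ∧
          L.length ≤ C * m * n) := by
  refine ⟨3, by norm_num, fun m n hm hn hmn i j => ?_⟩
  have : NeZero m := ⟨by omega⟩
  have : NeZero n := ⟨by omega⟩
  show WordLengthLE _ _ _ ∧ WordLengthLE _ _ _
  rw [finRotate_apply, finRotate_apply]
  rcases hmn with hm2 | hn2
  · obtain ⟨hh, hv⟩ := wordLengthLE_adjacent_swaps hn hm2 j i
    rw [mul_right_comm] at hh hv
    exact ⟨by simpa [permCongr_prodComm_swap] using hv.permCongr_prodComm,
      by simpa [permCongr_prodComm_swap] using hh.permCongr_prodComm⟩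
  · exact wordLengthLE_adjacent_swaps hm hn2 i j
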